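/- Let x_1, …, x_n and y_1, …, y_m be real numbers, S_F = diag(e^{i x_1}, …, e^{i x_n}), S_f = diag(e^{i y_1}, …, e^{i y_m}), and let K ∈ ℂ^{m×m}, R ∈ ℂ^{n×n} be the diagonal matrices with K_{jj} = (1 − e^{−i y_j})/|1 − e^{−i y_j}| if e^{−i y_j} ≠ 1, K_{jj} = i otherwise, and R_{kk} = (1 − e^{−i x_k})/|1 − e^{−i x_k}| if e^{−i x_k} ≠ 1, R_{kk} = i otherwise. Let M ∈ ℝ^{n×m} be real and A = S_F M − M S_f. Then the matrix Â = −i R A K has all entries real, and Â = 2 Im(R M Kᴴ), where Im is the entrywise imaginary part. -/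

import Mathlib

/-!
For a unit complex number `u`, the phase `r = (1 - ū) / |1 - ū|` (and `r = i` when `u = 1`)
satisfies `u r = -r̄`. With `r_k`, `c_j` the diagonal entries of `R`, `K` and `u_k`, `v_j` those
of `S_F`, `S_f`, the `(k, j)` entry of `R A K` is `r_k (u_k - v_j) M_kj c_j = z - z̄` for
`z = r_k M_kj c̄_j`, i.e. `2 i Im z`; multiplying by `-i` leaves the real number `2 Im z`.
-/

open Matrix
open scoped Classical

open Complex ComplexConjugate

lemma mul_normalized_one_sub_inv {u : ℂ} (hu : ‖u‖ = 1) :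
    u * (if u⁻¹ ≠ 1 then (1 - u⁻¹) / ((‖1 - u⁻¹‖ : ℝ) : ℂ) else I) =
      -conj (if u⁻¹ ≠ 1 then (1 - u⁻¹) / ((‖1 - u⁻¹‖ : ℝ) : ℂ) else I) := by
  have hu0 : u ≠ 0 := norm_ne_zero_iff.mp (by rw [hu]; exact one_ne_zero)
  have hconj : conj u⁻¹ = u := by
    rw [inv_def, map_mul, conj_conj, normSq_eq_norm_sq, hu]; simp
  split_ifs with h
  · rw [map_div₀, map_sub, map_one, hconj, conj_ofReal, ← mul_div_assoc, ← neg_div,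
      mul_sub, mul_one, mul_inv_cancel₀ hu0, neg_sub]
  · rw [inv_eq_one.mp (not_not.mp h), one_mul, conj_I, neg_neg]

lemma exp_mul_normalized_one_sub_exp_neg (θ : ℝ) :
    exp (I * θ) *
      (if exp (-(I * θ)) ≠ 1 then
        (1 - exp (-(I * θ))) / ((‖1 - exp (-(I * θ))‖ : ℝ) : ℂ) else I) =
      -conj (if exp (-(I * θ)) ≠ 1 then
        (1 - exp (-(I * θ))) / ((‖1 - exp (-(I * θ))‖ : ℝ) : ℂ) else I) := by
  rw [exp_neg]
  exact mul_normalized_one_sub_inv (by rw [mul_comm]; exact norm_exp_ofReal_mul_I θ)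

lemma neg_I_mul_mul_sub_mul_mul {r κ a b : ℂ} (t : ℝ)
    (hr : a * r = -conj r) (hκ : b * κ = -conj κ) :
    -I * (r * (a * t - t * b) * κ) = ((2 * (r * t * conj κ).im : ℝ) : ℂ) := by
  set z := r * t * conj κ
  have hz : r * (a * t - t * b) * κ = z - conj z := by
    simp only [z, map_mul, conj_conj, conj_ofReal]
    linear_combination ((t : ℂ) * κ) * hr - (r * t) * hκ
  rw [hz, sub_conj]
  push_cast
  linear_combination (-2 * (z.im : ℂ)) * I_mul_I

lemma smul_diagonal_mul_commutator_mul_diagonal {ι κ : Type*} [Fintype ι] [Fintype κ]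
    [DecidableEq ι] [DecidableEq κ] {r a : ι → ℂ} {c b : κ → ℂ}
    (hr : ∀ k, a k * r k = -conj (r k)) (hc : ∀ j, b j * c j = -conj (c j))
    (M : Matrix ι κ ℝ) :
    (-I) • (diagonal r * (diagonal a * M.map ofReal - M.map ofReal * diagonal b) *
        diagonal c) =
      (diagonal r * M.map ofReal * (diagonal c)ᴴ).map fun z => ((2 * z.im : ℝ) : ℂ) := by
  ext k j
  simp only [diagonal_conjTranspose, Matrix.smul_apply, mul_diagonal, diagonal_mul,
    Matrix.sub_apply, map_apply, Pi.star_apply, smul_eq_mul, RCLike.star_def]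
  exact neg_I_mul_mul_sub_mul_mul _ (hr k) (hc j)

theorem stmt_12 (m n : ℕ)
    (x : Fin n → ℝ) (y : Fin m → ℝ)
    (SF : Matrix (Fin n) (Fin n) ℂ)
    (hSF : SF = Matrix.diagonal fun k => Complex.exp (Complex.I * (x k : ℝ)))
    (Sf : Matrix (Fin m) (Fin m) ℂ)
    (hSf : Sf = Matrix.diagonal fun j => Complex.exp (Complex.I * (y j : ℝ)))
    (K : Matrix (Fin m) (Fin m) ℂ)
    (hK : K = Matrix.diagonal fun j =>
      if Complex.exp (-(Complex.I * (y j : ℝ))) ≠ 1 then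
        (1 - Complex.exp (-(Complex.I * (y j : ℝ))))
          / ((‖1 - Complex.exp (-(Complex.I * (y j : ℝ)))‖ : ℝ) : ℂ)
      else Complex.I)
    (R : Matrix (Fin n) (Fin n) ℂ)
    (hR : R = Matrix.diagonal fun k =>
      if Complex.exp (-(Complex.I * (x k : ℝ))) ≠ 1 then
        (1 - Complex.exp (-(Complex.I * (x k : ℝ))))
          / ((‖1 - Complex.exp (-(Complex.I * (x k : ℝ)))‖ : ℝ) : ℂ)
      else Complex.I)
    (M : Matrix (Fin n) (Fin m) ℝ)
    (A : Matrix (Fin n) (Fin m) ℂ)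
    (hA : A = SF * M.map (fun a => (a : ℂ)) - M.map (fun a => (a : ℂ)) * Sf)
    (Ahat : Matrix (Fin n) (Fin m) ℂ)
    (hAhat : Ahat = (-Complex.I) • (R * A * K)) :
    (∀ k j, (Ahat k j).im = 0) ∧
    (∀ k j, Ahat k j =
      ((2 * ((R * M.map (fun a => (a : ℂ)) * Kᴴ) k j).im : ℝ) : ℂ)) := by
  subst hSF hSf hK hR hA hAhat
  have hAhat := smul_diagonal_mul_commutator_mul_diagonal
    (fun k => exp_mul_normalized_one_sub_exp_neg (x k))
    (fun j => exp_mul_normalized_one_sub_exp_neg (y j)) M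
  refine ⟨fun k j => ?_, fun k j => congrFun₂ hAhat k j⟩
  rw [congrFun₂ hAhat k j, map_apply, ofReal_im]
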